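/- arXiv:1207.1691 — 2 statements merged into one kernel-verified Lean document; each statement's English description precedes it below -/
import Mathlib

section
/- (Bohnenblust) For real symmetric α×α matrices A_1, ..., A_n, the following are equivalent: (i) whenever u_1, ..., u_α ∈ ℝ^α satisfy Σ_{i=1}^α u_i^* A_j u_i = 0 for all j ∈ {1,...,n}, then u_1 = ... = u_α = 0; (ii) the linear span of A_1, ..., A_n contains a positive definite matrix. -/
/-!
If no combination `∑ cⱼ Aⱼ` is positive definite, the span of the `Aⱼ` misses the open convex cone
of matrices with positive quadratic form, so Hahn–Banach yields a linear functional vanishing on the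
span and positive on the cone. Its symmetrized representing matrix `P` is positive semidefinite,
nonzero (its trace is positive) and satisfies `tr (Aⱼ P) = 0`; writing `P = Bᵀ B`, the rows `uᵢ`
of `B` satisfy `∑ᵢ uᵢᵀ Aⱼ uᵢ = tr (Aⱼ P) = 0` without all vanishing. Conversely, if
`M = ∑ cⱼ Aⱼ` is positive definite, then `∑ᵢ uᵢᵀ M uᵢ = ∑ⱼ cⱼ ∑ᵢ uᵢᵀ Aⱼ uᵢ = 0` forces `uᵢ = 0`.
-/

open MvPolynomial Matrix
attribute [local instance] Matrix.frobeniusNormedAddCommGroup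

noncomputable section

abbrev RP (n : ℕ) := MvPolynomial (Fin n) ℝ

/-- Evaluation of the linear pencil `A₀ + ∑ xᵢ Aᵢ` at a point `x ∈ ℝⁿ`. -/
def pencilEval {n α : ℕ} (A0 : Matrix (Fin α) (Fin α) ℝ) (A : Fin n → Matrix (Fin α) (Fin α) ℝ)
    (x : Fin n → ℝ) : Matrix (Fin α) (Fin α) ℝ :=
  A0 + ∑ i, x i • A i

/-- The linear pencil `A₀ + ∑ xᵢ Aᵢ` as a matrix of polynomials. -/
def pencilPoly {n α : ℕ} (A0 : Matrix (Fin α) (Fin α) ℝ) (A : Fin n → Matrix (Fin α) (Fin α) ℝ) :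
    Matrix (Fin α) (Fin α) (RP n) :=
  A0.map C + ∑ i, (X i : RP n) • (A i).map C

/-- `v^* M v` for a matrix of polynomials. -/
def quadForm {n α : ℕ} (M : Matrix (Fin α) (Fin α) (RP n)) (v : Fin α → RP n) : RP n :=
  v ⬝ᵥ (M *ᵥ v)

/-- A sum of squares of polynomials. -/
def IsSos {n : ℕ} (p : RP n) : Prop := ∃ (k : ℕ) (q : Fin k → RP n), p = ∑ i, q i ^ 2

/-- An sos-matrix: a finite sum `∑ vⱼ vⱼ^*` with `vⱼ` vectors of polynomials. -/
def IsSosMatrix {n α : ℕ} (S : Matrix (Fin α) (Fin α) (RP n)) : Prop :=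
  ∃ (k : ℕ) (v : Fin k → Fin α → RP n), S = ∑ j, Matrix.vecMulVec (v j) (v j)

/-- Membership in the quadratic module `M_A` associated to the pencil. -/
def InQuadModule {n α : ℕ} (A0 : Matrix (Fin α) (Fin α) ℝ)
    (A : Fin n → Matrix (Fin α) (Fin α) ℝ) (p : RP n) : Prop :=
  ∃ s, IsSos s ∧ ∃ (k : ℕ) (v : Fin k → Fin α → RP n),
    p = s + ∑ j, quadForm (pencilPoly A0 A) (v j)

/-- Strong infeasibility: positive distance (Frobenius norm) between the range of the
pencil and the PSD cone. -/
def StronglyInfeasible {n α : ℕ} (A0 : Matrix (Fin α) (Fin α) ℝ)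
    (A : Fin n → Matrix (Fin α) (Fin α) ℝ) : Prop :=
  ∃ ε > (0:ℝ), ∀ (x : Fin n → ℝ) (B : Matrix (Fin α) (Fin α) ℝ), B.PosSemidef →
    ε ≤ dist (pencilEval A0 A x) B

section PosQuadCone

variable {m : Type*} [Fintype m]

-- Unlike `PosDef`, no symmetry is imposed, so that the set is open in the space of all matrices.
def posQuadCone (m : Type*) [Fintype m] : Set (Matrix m m ℝ) :=
  {M | ∀ v : m → ℝ, v ≠ 0 → 0 < v ⬝ᵥ M *ᵥ v}

lemma smul_dotProduct_mulVec_smul (M : Matrix m m ℝ) (c : ℝ) (v : m → ℝ) :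
    (c • v) ⬝ᵥ M *ᵥ (c • v) = c ^ 2 * (v ⬝ᵥ M *ᵥ v) := by
  rw [mulVec_smul, smul_dotProduct, dotProduct_smul, smul_eq_mul, smul_eq_mul]; ring

lemma mem_posQuadCone_iff_sphere {M : Matrix m m ℝ} :
    M ∈ posQuadCone m ↔ ∀ v ∈ Metric.sphere (0 : m → ℝ) 1, 0 < v ⬝ᵥ M *ᵥ v := by
  refine ⟨fun h v hv => h v (ne_zero_of_mem_unit_sphere ⟨v, hv⟩), fun h v hv => ?_⟩
  have hnorm : 0 < ‖v‖ := norm_pos_iff.mpr hv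
  have hmem : ‖v‖⁻¹ • v ∈ Metric.sphere (0 : m → ℝ) 1 := by
    rw [mem_sphere_zero_iff_norm, norm_smul, norm_inv, norm_norm, inv_mul_cancel₀ hnorm.ne']
  have := h _ hmem
  rw [smul_dotProduct_mulVec_smul] at this
  exact pos_of_mul_pos_right this (by positivity)

lemma isOpen_posQuadCone : IsOpen (posQuadCone m) := by
  have hq : Continuous fun p : Matrix m m ℝ × (m → ℝ) => p.2 ⬝ᵥ p.1 *ᵥ p.2 :=
    continuous_snd.dotProduct (continuous_fst.matrix_mulVec continuous_snd)
  refine isOpen_iff_mem_nhds.mpr fun M hM => ?_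
  rw [mem_posQuadCone_iff_sphere] at hM
  have := (isCompact_sphere (0 : m → ℝ) 1).eventually_forall_of_forall_eventually
    (P := fun N w => 0 < w ⬝ᵥ N *ᵥ w)
    fun v hv => (hq.tendsto (M, v)).eventually (lt_mem_nhds (hM v hv))
  filter_upwards [this] with N hN
  exact mem_posQuadCone_iff_sphere.mpr hN

lemma convex_posQuadCone : Convex ℝ (posQuadCone m) := by
  intro X hX Y hY a b ha hb hab v hv
  rw [add_mulVec, smul_mulVec, smul_mulVec, dotProduct_add, dotProduct_smul, dotProduct_smul,
    smul_eq_mul, smul_eq_mul]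
  rcases ha.eq_or_lt with rfl | ha
  · rw [zero_add] at hab
    simpa [hab] using hY v hv
  · exact add_pos_of_pos_of_nonneg (mul_pos ha (hX v hv)) (mul_nonneg hb (hY v hv).le)

lemma one_mem_posQuadCone [DecidableEq m] : (1 : Matrix m m ℝ) ∈ posQuadCone m := fun v hv => by
  simpa [one_mulVec] using dotProduct_star_self_pos_iff.mpr hv

lemma add_smul_one_mem_posQuadCone [DecidableEq m] {M : Matrix m m ℝ}
    (hM : ∀ v, 0 ≤ v ⬝ᵥ M *ᵥ v) {ε : ℝ} (hε : 0 < ε) : M + ε • 1 ∈ posQuadCone m := fun v hv => by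
  rw [add_mulVec, smul_mulVec, one_mulVec, dotProduct_add, dotProduct_smul, smul_eq_mul]
  exact add_pos_of_nonneg_of_pos (hM v) (mul_pos hε (by simpa using one_mem_posQuadCone v hv))

lemma posDef_iff_mem_posQuadCone {M : Matrix m m ℝ} (hM : M.IsSymm) :
    M.PosDef ↔ M ∈ posQuadCone m := by
  simp only [posDef_iff_dotProduct_mulVec, star_trivial, isHermitian_iff_isSymm, hM, true_and]
  rfl

end PosQuadCone

lemma exists_strongDual_pos_of_disjoint_submodule {E : Type*} [TopologicalSpace E]
    [AddCommGroup E] [Module ℝ E] [IsTopologicalAddGroup E] [ContinuousSMul ℝ E] {s : Set E}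
    (hs₁ : Convex ℝ s) (hs₂ : IsOpen s) {S : Submodule ℝ E} (disj : Disjoint s S) :
    ∃ f : StrongDual ℝ E, (∀ x ∈ S, f x = 0) ∧ ∀ a ∈ s, 0 < f a := by
  obtain ⟨f, u, hs, hS⟩ := geometric_hahn_banach_open hs₁ hs₂ S.convex disj
  -- a linear functional bounded below on a subspace vanishes there
  have hf : ∀ x ∈ S, f x = 0 := fun x hx => by
    by_contra hfx
    have := hS _ (S.smul_mem ((u - 1) / f x) hx)
    rw [map_smul, smul_eq_mul, div_mul_cancel₀ _ hfx] at this
    linarith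
  have hu : u ≤ 0 := by simpa using hS 0 S.zero_mem
  exact ⟨-f, fun x hx => by simp [hf x hx], fun a ha => by simpa using (hs a ha).trans_le hu⟩

section SymmRepr

variable {m : Type*} [DecidableEq m]

def symmRepr (g : Matrix m m ℝ →ₗ[ℝ] ℝ) : Matrix m m ℝ :=
  of fun i j => (g (single i j 1) + g (single j i 1)) / 2

variable (g : Matrix m m ℝ →ₗ[ℝ] ℝ)

lemma symmRepr_isSymm : (symmRepr g).IsSymm := by
  ext i j
  simp [symmRepr, add_comm]

variable [Fintype m]

lemma LinearMap.apply_eq_sum_mul_single {R n : Type*} [CommSemiring R] [Fintype n]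
    [DecidableEq n] (g : Matrix m n R →ₗ[R] R) (M : Matrix m n R) :
    g M = ∑ i, ∑ j, M i j * g (Matrix.single i j 1) := by
  conv_lhs => rw [matrix_eq_sum_single M]
  simp only [map_sum]
  refine Finset.sum_congr rfl fun i _ => Finset.sum_congr rfl fun j _ => ?_
  rw [← smul_eq_mul, ← map_smul, smul_single, smul_eq_mul, mul_one]

lemma sum_mul_symmRepr {A : Matrix m m ℝ} (hA : A.IsSymm) :
    ∑ i, ∑ j, A i j * symmRepr g i j = g A := by
  have hswap : ∑ i, ∑ j, A i j * g (single j i 1) = ∑ i, ∑ j, A i j * g (single i j 1) := by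
    rw [Finset.sum_comm]
    simp_rw [hA.apply]
  have hsplit : ∀ i j, A i j * symmRepr g i j =
      A i j * g (single i j 1) / 2 + A i j * g (single j i 1) / 2 := fun i j => by
    simp only [symmRepr, of_apply]; ring
  simp_rw [hsplit, Finset.sum_add_distrib, ← Finset.sum_div, hswap, ← g.apply_eq_sum_mul_single]
  ring

lemma trace_mul_symmRepr {A : Matrix m m ℝ} (hA : A.IsSymm) : trace (A * symmRepr g) = g A := by
  rw [← sum_mul_symmRepr g hA]
  simp only [trace, diag, mul_apply, (symmRepr_isSymm g).apply]

lemma dotProduct_mulVec_symmRepr (v : m → ℝ) : v ⬝ᵥ symmRepr g *ᵥ v = g (vecMulVec v v) := by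
  rw [← sum_mul_symmRepr g (transpose_vecMulVec v v)]
  simp only [dotProduct, mulVec, vecMulVec_apply, Finset.mul_sum]
  exact Finset.sum_congr rfl fun i _ => Finset.sum_congr rfl fun j _ => by ring

lemma apply_nonneg_of_pos_on_posQuadCone (hg : ∀ M ∈ posQuadCone m, 0 < g M)
    {M : Matrix m m ℝ} (hM : ∀ v, 0 ≤ v ⬝ᵥ M *ᵥ v) : 0 ≤ g M := by
  have hg1 : 0 < g 1 := hg 1 one_mem_posQuadCone
  refine le_of_forall_pos_lt_add fun ε hε => ?_
  have := hg _ (add_smul_one_mem_posQuadCone hM (div_pos hε hg1))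
  rwa [map_add, map_smul, smul_eq_mul, div_mul_cancel₀ _ hg1.ne'] at this

lemma posSemidef_symmRepr (hg : ∀ M ∈ posQuadCone m, 0 < g M) : (symmRepr g).PosSemidef := by
  refine PosSemidef.of_dotProduct_mulVec_nonneg (isHermitian_iff_isSymm.mpr (symmRepr_isSymm g))
    fun v => ?_
  rw [star_trivial, dotProduct_mulVec_symmRepr]
  refine apply_nonneg_of_pos_on_posQuadCone g hg fun w => ?_
  rw [vecMulVec_mulVec, op_smul_eq_smul, dotProduct_smul, smul_eq_mul, dotProduct_comm]
  exact mul_self_nonneg _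

end SymmRepr

lemma Matrix.sum_dotProduct_mulVec_eq_trace {R k m : Type*} [CommSemiring R] [Fintype k]
    [Fintype m] (u : Matrix k m R) (A : Matrix m m R) :
    ∑ i, u i ⬝ᵥ A *ᵥ u i = trace (A * (uᵀ * u)) := by
  rw [← Matrix.mul_assoc, trace_mul_comm, ← Matrix.mul_assoc]
  simp only [trace, diag, mul_apply, transpose_apply, dotProduct, mulVec, Finset.mul_sum,
    Finset.sum_mul]
  exact Finset.sum_congr rfl fun i _ => Finset.sum_comm.trans
    (Finset.sum_congr rfl fun j _ => Finset.sum_congr rfl fun l _ => by ring)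

open scoped ComplexOrder in
lemma Matrix.PosSemidef.exists_eq_conjTranspose_mul_self {𝕜 n : Type*} [RCLike 𝕜] [Fintype n]
    [DecidableEq n] {P : Matrix n n 𝕜} (hP : P.PosSemidef) : ∃ B : Matrix n n 𝕜, P = Bᴴ * B := by
  open MatrixOrder in
  obtain ⟨B, hB, -, hBB⟩ := CFC.exists_sqrt_of_isSelfAdjoint_of_quasispectrumRestricts
    hP.isHermitian (QuasispectrumRestricts.nnreal_of_nonneg hP.nonneg)
  exact ⟨B, by rw [show Bᴴ = B from hB, hBB]⟩

lemma Matrix.PosDef.eq_zero_of_sum_dotProduct_mulVec_eq_zero {k m : Type*} [Fintype k]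
    [Fintype m] {M : Matrix m m ℝ} (hM : M.PosDef) {u : Matrix k m ℝ}
    (hu : ∑ i, u i ⬝ᵥ M *ᵥ u i = 0) : u = 0 := by
  have hnonneg : ∀ i, 0 ≤ u i ⬝ᵥ M *ᵥ u i := fun i => by
    simpa using hM.posSemidef.dotProduct_mulVec_nonneg (u i)
  have hzero := (Finset.sum_eq_zero_iff_of_nonneg fun i _ => hnonneg i).mp hu
  funext i
  by_contra hi
  simpa [hzero i (Finset.mem_univ i)] using hM.dotProduct_mulVec_pos hi

lemma Matrix.sum_dotProduct_sum_smul_mulVec {R k m ι : Type*} [CommSemiring R] [Fintype k]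
    [Fintype m] [Fintype ι] (u : k → m → R) (c : ι → R) (A : ι → Matrix m m R) :
    ∑ i, u i ⬝ᵥ (∑ j, c j • A j) *ᵥ u i = ∑ j, c j * ∑ i, u i ⬝ᵥ A j *ᵥ u i := by
  simp only [sum_mulVec, smul_mulVec, dotProduct_sum, dotProduct_smul, smul_eq_mul,
    Finset.mul_sum]
  exact Finset.sum_comm

lemma exists_posSemidef_ne_zero_trace_mul_eq_zero {m ι : Type*} [Fintype m] [DecidableEq m]
    [Fintype ι] {A : ι → Matrix m m ℝ} (hA : ∀ j, (A j).IsSymm)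
    (h : ¬∃ c : ι → ℝ, (∑ j, c j • A j).PosDef) :
    ∃ P : Matrix m m ℝ, P.PosSemidef ∧ P ≠ 0 ∧ ∀ j, trace (A j * P) = 0 := by
  have disj : Disjoint (posQuadCone m) (Submodule.span ℝ (Set.range A)) := by
    refine Set.disjoint_left.mpr fun M hM hMS => h ?_
    obtain ⟨c, rfl⟩ := (Submodule.mem_span_range_iff_exists_fun ℝ).mp hMS
    have hsymm : (∑ j, c j • A j).IsSymm := by
      simp only [IsSymm, transpose_sum, transpose_smul, (hA _).eq]
    exact ⟨c, (posDef_iff_mem_posQuadCone hsymm).mpr hM⟩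
  obtain ⟨f, hf0, hfpos⟩ :=
    exists_strongDual_pos_of_disjoint_submodule convex_posQuadCone isOpen_posQuadCone disj
  refine ⟨symmRepr f.toLinearMap, posSemidef_symmRepr _ hfpos, fun hP => ?_, fun j => ?_⟩
  · have := trace_mul_symmRepr f.toLinearMap (isSymm_one (n := m))
    rw [one_mul, hP, trace_zero] at this
    exact (hfpos 1 one_mem_posQuadCone).ne this
  · rw [trace_mul_symmRepr _ (hA j)]
    exact hf0 _ (Submodule.subset_span (Set.mem_range_self j))

/-- Bohnenblust's lemma. -/
theorem stmt_2 {n α : ℕ} (A : Fin n → Matrix (Fin α) (Fin α) ℝ) (hA : ∀ j, (A j).IsSymm) :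
    (∀ u : Fin α → Fin α → ℝ,
        (∀ j, (∑ i, u i ⬝ᵥ (A j *ᵥ u i)) = 0) → ∀ i, u i = 0) ↔
      ∃ c : Fin n → ℝ, (∑ j, c j • A j).PosDef := by
  constructor
  · intro h
    by_contra hno
    obtain ⟨P, hP, hP0, htrace⟩ := exists_posSemidef_ne_zero_trace_mul_eq_zero hA hno
    obtain ⟨B, rfl⟩ := hP.exists_eq_conjTranspose_mul_self
    rw [conjTranspose_eq_transpose_of_trivial] at hP0 htrace
    have hB : B = 0 := funext <| h B fun j => by rw [sum_dotProduct_mulVec_eq_trace, htrace j]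
    simp [hB] at hP0
  · rintro ⟨c, hc⟩ u hu
    refine congrFun (hc.eq_zero_of_sum_dotProduct_mulVec_eq_zero ?_)
    simp [sum_dotProduct_sum_smul_mulVec, hu]
end
end

section
/- Let A be a linear pencil which is either weakly infeasible or weakly feasible (feasible but with no x such that A(x) ≻ 0). Then there exist k ≥ 1 and nonzero vectors u_1, ..., u_k ∈ ℝ^α such that Σ_{i=1}^k u_i^* A u_i = 0 as a polynomial. -/
open MvPolynomial Matrix
attribute [local instance] Matrix.frobeniusNormedAddCommGroup

noncomputable section

/-!
If no value of the pencil is positive definite, its range is a convex set disjoint from the open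
cone of positive definite matrices, and Hahn–Banach gives a functional `φ` that is nonnegative on
the positive semidefinite cone, with `φ ≤ c ≤ 0` on the range and `φ 1 > c`. An affine function
bounded above is constant, so `φ (A x) = φ A₀` for all `x`; a positive semidefinite value (weak
feasibility) or positive semidefinite matrices arbitrarily close to the range (weak infeasibility)
force `φ A₀ ≥ 0`, hence `φ ∘ A ≡ 0`. On symmetric matrices `φ M = tr (M W)` for a positive
semidefinite `W = ∑ uᵢ uᵢᵀ`, so `∑ uᵢᵀ A(x) uᵢ = φ (A x) = 0`, and `φ 1 > 0` makes the family
nonempty.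
-/

lemma nonpos_of_forall_pos_mul_le {a c : ℝ} (h : ∀ t > 0, t * a ≤ c) : a ≤ 0 := by
  by_contra! ha
  have := h ((|c| + 1) / a) (by positivity)
  rw [div_mul_cancel₀ _ ha.ne'] at this
  linarith [le_abs_self c]

lemma eq_zero_of_forall_add_mul_le {a b c : ℝ} (h : ∀ t : ℝ, a + t * b ≤ c) : b = 0 := by
  refine le_antisymm (nonpos_of_forall_pos_mul_le (c := c - a) fun t _ => ?_)
    (neg_nonpos.mp (nonpos_of_forall_pos_mul_le (c := c - a) fun t _ => ?_))
  · linarith [h t]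
  · linarith [h (-t)]

theorem exists_fin_forall_ne_zero_sum_eq {κ V M : Type*} [Fintype κ] [Zero V] [AddCommMonoid M]
    (v : κ → V) (g : V → M) (hg : g 0 = 0) :
    ∃ (k : ℕ) (u : Fin k → V), (∀ i, u i ≠ 0) ∧ ∑ i, g (u i) = ∑ i, g (v i) := by
  classical
  let e := Fintype.equivFin {i // v i ≠ 0}
  refine ⟨_, fun m => v (e.symm m), fun m => (e.symm m).2, ?_⟩
  rw [e.symm.sum_comp (fun i => g (v i)),
    ← Finset.sum_subtype {i | v i ≠ 0} (fun i => by simp) (fun i => g (v i))]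
  exact Finset.sum_filter_of_ne fun i _ hi hvi => hi (by rw [hvi, hg])

namespace Matrix

variable {ι : Type*} [Fintype ι]

/-- Testing on the compact unit sphere (for the sup norm) rather than on all `v ≠ 0` makes this set
open; on symmetric matrices it is positive definiteness. -/
def sphereQuadPos (ι : Type*) [Fintype ι] : Set (Matrix ι ι ℝ) :=
  {M | ∀ v ∈ Metric.sphere (0 : ι → ℝ) 1, 0 < v ⬝ᵥ M *ᵥ v}

lemma isOpen_sphereQuadPos : IsOpen (sphereQuadPos ι) := by
  refine isOpen_iff_eventually.mpr fun M hM => ?_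
  refine (isCompact_sphere _ _).eventually_forall_of_forall_eventually fun v hv => ?_
  have hc : Continuous fun p : Matrix ι ι ℝ × (ι → ℝ) => p.2 ⬝ᵥ p.1 *ᵥ p.2 := by fun_prop
  exact hc.continuousAt.eventually (lt_mem_nhds (hM v hv))

lemma convex_sphereQuadPos : Convex ℝ (sphereQuadPos ι) := by
  intro M hM N hN a b ha hb hab v hv
  simp only [add_mulVec, smul_mulVec, dotProduct_add, dotProduct_smul, smul_eq_mul]
  rcases ha.eq_or_lt with rfl | ha
  · simpa [show b = 1 by linarith] using hN v hv
  · exact add_pos_of_pos_of_nonneg (mul_pos ha (hM v hv)) (mul_nonneg hb (hN v hv).le)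

lemma PosDef.mem_sphereQuadPos {M : Matrix ι ι ℝ} (hM : M.PosDef) : M ∈ sphereQuadPos ι := by
  intro v hv
  have hv0 : v ≠ 0 := by rintro rfl; simp at hv
  simpa using hM.dotProduct_mulVec_pos hv0

lemma posDef_of_mem_sphereQuadPos {M : Matrix ι ι ℝ} (hM : M.IsSymm) (hpos : M ∈ sphereQuadPos ι) :
    M.PosDef := by
  refine PosDef.of_dotProduct_mulVec_pos (isHermitian_iff_isSymm.mpr hM) fun v hv => ?_
  have hn : 0 < ‖v‖ := norm_pos_iff.mpr hv
  have hw := hpos (‖v‖⁻¹ • v) (by simp [norm_smul, hn.ne'])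
  simp only [mulVec_smul, dotProduct_smul, smul_dotProduct, smul_eq_mul] at hw
  simpa using pos_of_mul_pos_right (pos_of_mul_pos_right hw (inv_pos.mpr hn).le)
    (inv_pos.mpr hn).le

lemma PosSemidef.mem_closure_sphereQuadPos [DecidableEq ι] {B : Matrix ι ι ℝ}
    (hB : B.PosSemidef) : B ∈ closure (sphereQuadPos ι) := by
  have hlim : Filter.Tendsto (fun ε : ℝ => B + ε • (1 : Matrix ι ι ℝ)) (nhdsWithin 0 (Set.Ioi 0))
      (nhds B) :=
    ((continuous_const.add (continuous_id.smul continuous_const)).tendsto' 0 B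
      (by simp)).mono_left nhdsWithin_le_nhds
  refine mem_closure_of_tendsto hlim (eventually_nhdsWithin_of_forall fun ε hε => ?_)
  exact (PosDef.posSemidef_add hB (PosDef.one.smul hε)).mem_sphereQuadPos

theorem exists_separating_functional_of_forall_not_posDef [DecidableEq ι] {L : Set (Matrix ι ι ℝ)}
    (hconv : Convex ℝ L) (hsymm : ∀ M ∈ L, M.IsSymm) (hnotPD : ∀ M ∈ L, ¬ M.PosDef) :
    ∃ (φ : Matrix ι ι ℝ →L[ℝ] ℝ) (c : ℝ), c ≤ 0 ∧ c < φ 1 ∧ (∀ B, B.PosSemidef → 0 ≤ φ B) ∧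
      ∀ M ∈ L, φ M ≤ c := by
  have hdisj : Disjoint (sphereQuadPos ι) L := Set.disjoint_left.mpr fun M hpos hL =>
    hnotPD M hL (posDef_of_mem_sphereQuadPos (hsymm M hL) hpos)
  obtain ⟨f, u, hfpos, hfL⟩ :=
    geometric_hahn_banach_open convex_sphereQuadPos isOpen_sphereQuadPos hconv hdisj
  have hfPSD : ∀ B : Matrix ι ι ℝ, B.PosSemidef → f B ≤ u := fun B hB =>
    closure_minimal (fun M hM => (hfpos M hM).le) (isClosed_le f.continuous continuous_const)
      hB.mem_closure_sphereQuadPos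
  refine ⟨-f, -u, neg_nonpos.mpr (by simpa using hfPSD 0 PosSemidef.zero),
    neg_lt_neg (hfpos 1 PosDef.one.mem_sphereQuadPos), fun B hB => ?_,
    fun M hM => neg_le_neg (hfL M hM)⟩
  rw [_root_.neg_apply, neg_nonneg]
  refine nonpos_of_forall_pos_mul_le (c := u) fun t ht => ?_
  simpa using hfPSD (t • B) (hB.smul ht.le)

lemma trace_mul_vecMulVec_self {R : Type*} [CommSemiring R] (M : Matrix ι ι R) (v : ι → R) :
    (M * vecMulVec v v).trace = v ⬝ᵥ M *ᵥ v := by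
  rw [mul_vecMulVec, trace_vecMulVec, dotProduct_comm]

lemma trace_mul_of_single [DecidableEq ι] {R : Type*} [CommSemiring R]
    (φ : Matrix ι ι R →ₗ[R] R) (M : Matrix ι ι R) :
    (M * of fun j k => φ (single k j 1)).trace = φ M := by
  conv_rhs => rw [matrix_eq_sum_single M]
  simp only [map_sum, trace, diag, mul_apply, of_apply]
  refine Finset.sum_congr rfl fun j _ => Finset.sum_congr rfl fun k _ => ?_
  rw [← smul_eq_mul, ← map_smul, smul_single, smul_eq_mul, mul_one]

lemma exists_posSemidef_trace_mul_eq (φ : Matrix ι ι ℝ →ₗ[ℝ] ℝ)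
    (hφ : ∀ B, B.PosSemidef → 0 ≤ φ B) :
    ∃ W : Matrix ι ι ℝ, W.PosSemidef ∧ ∀ M, M.IsSymm → (M * W).trace = φ M := by
  classical
  set W₀ : Matrix ι ι ℝ := of fun j k => φ (single k j 1)
  have htrace : ∀ M : Matrix ι ι ℝ, M.IsSymm → (M * ((2 : ℝ)⁻¹ • (W₀ + W₀ᵀ))).trace = φ M := by
    intro M hM
    have hT : (M * W₀ᵀ).trace = (M * W₀).trace := by
      rw [← trace_transpose, transpose_mul, transpose_transpose, hM.eq, trace_mul_comm]
    rw [Matrix.mul_smul, trace_smul, mul_add, trace_add, hT, trace_mul_of_single, smul_eq_mul]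
    ring
  refine ⟨_, PosSemidef.of_dotProduct_mulVec_nonneg ?_ fun v => ?_, htrace⟩
  · simp [IsHermitian, transpose_add, add_comm]
  · have hvv : (vecMulVec v v).PosSemidef := by simpa using posSemidef_vecMulVec_self_star v
    rw [star_trivial, ← trace_mul_vecMulVec_self, trace_mul_comm,
      htrace _ (isHermitian_iff_isSymm.mp hvv.isHermitian)]
    exact hφ _ hvv

theorem exists_sum_dotProduct_mulVec_eq (φ : Matrix ι ι ℝ →ₗ[ℝ] ℝ)
    (hφ : ∀ B, B.PosSemidef → 0 ≤ φ B) :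
    ∃ (k : ℕ) (u : Fin k → ι → ℝ), (∀ i, u i ≠ 0) ∧
      ∀ M, M.IsSymm → ∑ i, u i ⬝ᵥ M *ᵥ u i = φ M := by
  obtain ⟨W, hW, hWφ⟩ := exists_posSemidef_trace_mul_eq φ hφ
  obtain ⟨m, v, rfl⟩ := posSemidef_iff_eq_sum_vecMulVec.mp hW
  obtain ⟨k, u, hu, hsum⟩ := exists_fin_forall_ne_zero_sum_eq v
    (fun w (M : Matrix ι ι ℝ) => w ⬝ᵥ M *ᵥ w) (by ext; simp)
  refine ⟨k, u, hu, fun M hM => ?_⟩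
  rw [← hWφ M hM, ← Finset.sum_apply M _ (fun i (M : Matrix ι ι ℝ) => u i ⬝ᵥ M *ᵥ u i), hsum,
    Finset.mul_sum, trace_sum, Finset.sum_apply]
  simp [trace_mul_vecMulVec_self]

end Matrix

section Pencil

variable {n α : ℕ} (A0 : Matrix (Fin α) (Fin α) ℝ) (A : Fin n → Matrix (Fin α) (Fin α) ℝ)

variable {A0 A} in
lemma pencilEval_isSymm (hA0 : A0.IsSymm) (hA : ∀ i, (A i).IsSymm) (x : Fin n → ℝ) :
    (pencilEval A0 A x).IsSymm := by
  simp only [Matrix.IsSymm, pencilEval, Matrix.transpose_add, Matrix.transpose_sum,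
    Matrix.transpose_smul, hA0.eq, (hA _).eq]

lemma convex_range_pencilEval : Convex ℝ (Set.range (pencilEval A0 A)) := by
  have : pencilEval A0 A = (fun M => A0 + M) ∘ Fintype.linearCombination ℝ A := by
    ext1 x; simp [pencilEval, Fintype.linearCombination_apply]
  rw [this, Set.range_comp, ← Set.image_univ]
  exact (convex_univ.linear_image _).translate A0

variable {F : Type*} [FunLike F (Matrix (Fin α) (Fin α) ℝ) ℝ]
  [LinearMapClass F ℝ (Matrix (Fin α) (Fin α) ℝ) ℝ]

lemma map_pencilEval (φ : F) (x : Fin n → ℝ) :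
    φ (pencilEval A0 A x) = φ A0 + ∑ i, x i * φ (A i) := by
  simp [pencilEval, map_sum]

lemma map_pencilEval_eq_of_le {φ : F} {c : ℝ} (h : ∀ x, φ (pencilEval A0 A x) ≤ c)
    (x : Fin n → ℝ) : φ (pencilEval A0 A x) = φ A0 := by
  have hzero : ∀ i, φ (A i) = 0 := fun i => eq_zero_of_forall_add_mul_le fun t => by
    simpa [map_pencilEval, Pi.single_apply] using h (Pi.single i t)
  simp [map_pencilEval, hzero]

lemma exists_neg_lt_map_pencilEval_of_not_stronglyInfeasible
    (φ : Matrix (Fin α) (Fin α) ℝ →L[ℝ] ℝ) (hφ : ∀ B, B.PosSemidef → 0 ≤ φ B)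
    (h : ¬ StronglyInfeasible A0 A) {ε : ℝ} (hε : 0 < ε) :
    ∃ x, -ε < φ (pencilEval A0 A x) := by
  obtain ⟨δ, hδ, hφδ⟩ := Metric.continuousAt_iff.mp (φ.continuous.continuousAt (x := 0)) ε hε
  unfold StronglyInfeasible at h
  push Not at h
  obtain ⟨x, B, hB, hxB⟩ := h δ hδ
  have hclose := hφδ (x := pencilEval A0 A x - B) (by rwa [dist_zero_right, ← dist_eq_norm])
  rw [map_sub, map_zero, Real.dist_eq, sub_zero] at hclose
  exact ⟨x, by linarith [neg_abs_le (φ (pencilEval A0 A x) - φ B), hφ B hB]⟩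

lemma eval_quadForm_pencilPoly (x : Fin n → ℝ) (u : Fin α → ℝ) :
    eval x (quadForm (pencilPoly A0 A) fun a => C (u a)) = u ⬝ᵥ pencilEval A0 A x *ᵥ u := by
  simp only [quadForm, pencilPoly, pencilEval, mulVec, dotProduct, Matrix.add_apply,
    Matrix.sum_apply, Matrix.smul_apply, Matrix.map_apply, smul_eq_mul, map_sum, map_mul,
    map_add, eval_C, eval_X]

end Pencil

/-- For a weakly infeasible or weakly feasible pencil, there exist nonzero vectors
`u₁,…,u_k` with `∑ᵢ uᵢ^* A uᵢ = 0` as a polynomial. -/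
theorem stmt_3 {n α : ℕ} (A0 : Matrix (Fin α) (Fin α) ℝ)
    (A : Fin n → Matrix (Fin α) (Fin α) ℝ) (hA0 : A0.IsSymm) (hA : ∀ i, (A i).IsSymm)
    (h : ((∀ x : Fin n → ℝ, ¬ (pencilEval A0 A x).PosSemidef) ∧ ¬ StronglyInfeasible A0 A)
       ∨ ((∃ x : Fin n → ℝ, (pencilEval A0 A x).PosSemidef)
            ∧ ∀ x : Fin n → ℝ, ¬ (pencilEval A0 A x).PosDef)) :
    ∃ (k : ℕ), 1 ≤ k ∧ ∃ u : Fin k → Fin α → ℝ, (∀ i, u i ≠ 0) ∧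
      (∑ i, quadForm (pencilPoly A0 A) (fun a => C (u i a))) = 0 := by
  have hnotPD : ∀ x, ¬ (pencilEval A0 A x).PosDef := by
    rcases h with ⟨hnotPSD, -⟩ | ⟨-, hnotPD⟩
    exacts [fun x hx => hnotPSD x hx.posSemidef, hnotPD]
  obtain ⟨φ, c, hc, hφ1, hφPSD, hφL⟩ :=
    Matrix.exists_separating_functional_of_forall_not_posDef (convex_range_pencilEval A0 A)
      (by rintro _ ⟨x, rfl⟩; exact pencilEval_isSymm hA0 hA x)
      (by rintro _ ⟨x, rfl⟩; exact hnotPD x)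
  have hconst := map_pencilEval_eq_of_le A0 A fun x => hφL _ ⟨x, rfl⟩
  have hφA0 : φ A0 = 0 := by
    refine le_antisymm ((hconst 0 ▸ hφL _ ⟨0, rfl⟩).trans hc) ?_
    rcases h with ⟨-, hweak⟩ | ⟨⟨x, hx⟩, -⟩
    · refine le_of_forall_pos_lt_add fun ε hε => ?_
      obtain ⟨x, hx⟩ :=
        exists_neg_lt_map_pencilEval_of_not_stronglyInfeasible A0 A φ hφPSD hweak hε
      linarith [hconst x]
    · exact hconst x ▸ hφPSD _ hx
  obtain ⟨k, u, hu, hφu⟩ := Matrix.exists_sum_dotProduct_mulVec_eq φ.toLinearMap hφPSD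
  refine ⟨k, Nat.one_le_iff_ne_zero.mpr ?_, u, hu, MvPolynomial.funext fun x => ?_⟩
  · rintro rfl
    have h1 := hφu 1 Matrix.isSymm_one
    simp only [Finset.univ_eq_empty, Finset.sum_empty, ContinuousLinearMap.coe_coe] at h1
    linarith [hconst 0 ▸ hφL _ ⟨0, rfl⟩]
  · simp only [map_sum, eval_quadForm_pencilPoly, map_zero]
    rw [hφu _ (pencilEval_isSymm hA0 hA x), ContinuousLinearMap.coe_coe, hconst, hφA0]
end
end
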